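/- For the lower-bound estimate L(x) = max over rows of L_i(x) (where L_i(x) = C if the bucket's key equals x, else 0), it holds that L(x) ≤ S(x), and moreover S(x) − L(x) ≤ εS with probability at least 1 − δ. -/

import Mathlib

/-- State of a bucket in MV-Sketch: total value `V`, candidate key `K`,
indicator counter `C`. -/
structure Bucket (α : Type*) where
  V : ℝ
  K : α
  C : ℝ

/-- One update of the generalized majority vote algorithm on input `(y, v)`. -/
noncomputable def Bucket.step {α : Type*} [DecidableEq α] (b : Bucket α) (p : α × ℝ) :
    Bucket α :=
  if p.1 = b.K then ⟨b.V + p.2, b.K, b.C + p.2⟩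
  else if b.C - p.2 < 0 then ⟨b.V + p.2, p.1, p.2 - b.C⟩
  else ⟨b.V + p.2, b.K, b.C - p.2⟩

/-- State of the bucket after processing the whole stream `l`, starting from
an arbitrary initial key `k0`, `V = 0`, `C = 0`. -/
noncomputable def runBucket {α : Type*} [DecidableEq α] (k0 : α) (l : List (α × ℝ)) :
    Bucket α :=
  l.foldl Bucket.step ⟨0, k0, 0⟩

/-- Total value of flow `x` in the stream `l`. -/
def flowSum {α : Type*} [DecidableEq α] (x : α) (l : List (α × ℝ)) : ℝ :=
  ((l.filter fun p => p.1 = x).map Prod.snd).sum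

open MeasureTheory ProbabilityTheory


/-!
Each bucket runs the generalized majority vote on the sub-stream of keys hashed to it, and an
induction over the stream shows that its counter `C` never exceeds the true sum of its key and
that `2 S(y) ≤ T ± C` for every key `y`, where `T` is the bucket's total. Hence `L_i(x) ≤ S(x)`
and `S(x) - L_i(x) ≤ T - S(x)`, and `T - S(x)` is the weight of the other keys colliding with `x`.
By pairwise independence each of them collides with probability `1/w = ε/2`, so Markov's
inequality bounds the probability that row `i` has collision weight above `ε S` by `1/2`, and
independence of the rows bounds the probability that this happens in every row by `2⁻ʳ = δ`.
-/

section MajorityVote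

variable {α : Type*} [DecidableEq α]

theorem flowSum_cons (x : α) (p : α × ℝ) (l : List (α × ℝ)) :
    flowSum x (p :: l) = (if p.1 = x then p.2 else 0) + flowSum x l := by
  by_cases h : p.1 = x <;> simp [flowSum, h]

theorem flowSum_append_singleton (x : α) (l : List (α × ℝ)) (p : α × ℝ) :
    flowSum x (l ++ [p]) = flowSum x l + if p.1 = x then p.2 else 0 := by
  by_cases h : p.1 = x <;> simp [flowSum, h]

theorem flowSum_nonneg {l : List (α × ℝ)} (hv : ∀ p ∈ l, 0 ≤ p.2) (x : α) :
    0 ≤ flowSum x l :=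
  List.sum_nonneg <| by simpa using fun b hb => hv _ hb

theorem sum_flowSum [Fintype α] (l : List (α × ℝ)) :
    ∑ y, flowSum y l = (l.map Prod.snd).sum := by
  induction l with
  | nil => simp [flowSum]
  | cons p l ih => simp [flowSum_cons, Finset.sum_add_distrib, ih]

theorem flowSum_filter_eq_ite {β : Type*} [DecidableEq β] (h : α → β) (x y : α)
    (l : List (α × ℝ)) :
    flowSum y (l.filter fun p => h p.1 = h x) = if h y = h x then flowSum y l else 0 := by
  induction l with
  | nil => simp [flowSum]
  | cons p l ih =>
    rw [List.filter_cons]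
    split_ifs at ih ⊢ <;> simp_all [flowSum_cons] <;> grind

/-- Invariant of the generalized majority vote: a key other than the candidate `K` carries at
most `(T - C) / 2`, where `T` is the total of the stream. -/
structure Bucket.IsMajoritySummary (b : Bucket α) (l : List (α × ℝ)) : Prop where
  C_nonneg : 0 ≤ b.C
  C_le_flowSum : b.C ≤ flowSum b.K l
  two_mul_flowSum_le :
    ∀ y, 2 * flowSum y l ≤ (l.map Prod.snd).sum + if y = b.K then b.C else -b.C

theorem Bucket.IsMajoritySummary.step {b : Bucket α} {l : List (α × ℝ)}
    (hb : b.IsMajoritySummary l) (hv : ∀ p ∈ l, 0 ≤ p.2) {p : α × ℝ} (hp : 0 ≤ p.2) :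
    (b.step p).IsMajoritySummary (l ++ [p]) := by
  obtain ⟨hC, hCK, hmaj⟩ := hb
  -- when the candidate is replaced by `p.1`, its new counter `p.2 - C` is at most `S p.1 + p.2`
  have hS := flowSum_nonneg hv
  simp only [Bucket.step]
  constructor <;> split_ifs <;> simp only [flowSum_append_singleton, List.map_append,
    List.sum_append, List.map_singleton, List.sum_singleton] <;> grind

theorem isMajoritySummary_runBucket (k0 : α) {l : List (α × ℝ)} (hv : ∀ p ∈ l, 0 ≤ p.2) :
    (runBucket k0 l).IsMajoritySummary l := by
  induction l using List.reverseRecOn with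
  | nil => exact ⟨le_rfl, le_rfl, fun y => by simp [flowSum, runBucket]⟩
  | append_singleton l p ih =>
    simp only [List.mem_append, List.mem_singleton] at hv
    rw [runBucket, List.foldl_append, List.foldl_cons, List.foldl_nil]
    exact (ih fun q hq => hv q (.inl hq)).step (fun q hq => hv q (.inl hq)) (hv p (.inr rfl))

def Bucket.lowerEstimate (b : Bucket α) (x : α) : ℝ :=
  if b.K = x then b.C else 0

namespace Bucket.IsMajoritySummary

variable {b : Bucket α} {l : List (α × ℝ)}

theorem lowerEstimate_le (hb : b.IsMajoritySummary l) (hv : ∀ p ∈ l, 0 ≤ p.2) (x : α) :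
    b.lowerEstimate x ≤ flowSum x l := by
  unfold lowerEstimate
  split_ifs with hK
  · exact hK ▸ hb.C_le_flowSum
  · exact flowSum_nonneg hv x

theorem flowSum_sub_lowerEstimate_le (hb : b.IsMajoritySummary l) (x : α) :
    flowSum x l - b.lowerEstimate x ≤ (l.map Prod.snd).sum - flowSum x l := by
  have hmaj := hb.two_mul_flowSum_le x
  unfold lowerEstimate
  by_cases hK : b.K = x
  · rw [if_pos hK]
    rw [if_pos hK.symm] at hmaj
    linarith
  · rw [if_neg hK]
    rw [if_neg (Ne.symm hK)] at hmaj
    linarith [hb.C_nonneg]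

end Bucket.IsMajoritySummary

end MajorityVote

section NullMeasurable

open Set

variable {Ω : Type*} [MeasurableSpace Ω] {μ : Measure Ω} [IsFiniteMeasure μ]

theorem nullMeasurableSet_of_measure_add_measure_compl_le {s : Set Ω}
    (h : μ s + μ sᶜ ≤ μ univ) : NullMeasurableSet s μ := by
  set t := toMeasurable μ s
  have ht : MeasurableSet t := measurableSet_toMeasurable μ s
  have hst : s ⊆ t := subset_toMeasurable μ s
  have hcompl : μ sᶜ = μ (t \ s) + μ tᶜ := by
    rw [← measure_inter_add_sdiff sᶜ ht]
    congr 2 <;> ext ω <;> simp only [mem_inter_iff, mem_compl_iff, mem_sdiff]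
    · exact and_comm
    · exact ⟨And.right, fun hω => ⟨fun hs => hω (hst hs), hω⟩⟩
  have hnull : μ (t \ s) = 0 := by
    have : μ s + μ tᶜ + μ (t \ s) ≤ μ s + μ tᶜ + 0 := calc
      μ s + μ tᶜ + μ (t \ s) = μ s + μ sᶜ := by rw [hcompl]; ring
      _ ≤ μ univ := h
      _ = μ s + μ tᶜ + 0 := by
        rw [add_zero, ← measure_toMeasurable s, measure_add_measure_compl ht]
    exact nonpos_iff_eq_zero.1 (ENNReal.le_of_add_le_add_left (by finiteness) this)
  exact ht.nullMeasurableSet.congr (ae_eq_set.2 ⟨hnull, by simp [sdiff_eq_empty.2 hst]⟩)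

theorem aemeasurable_of_sum_measure_preimage_singleton_le {β : Type*} [Fintype β]
    [MeasurableSpace β] [MeasurableSingletonClass β] {f : Ω → β}
    (h : ∑ j, μ (f ⁻¹' {j}) ≤ μ univ) : AEMeasurable f μ := by
  classical
  have hfiber (j : β) : NullMeasurableSet (f ⁻¹' {j}) μ := by
    refine nullMeasurableSet_of_measure_add_measure_compl_le (le_trans ?_ h)
    rw [← Finset.add_sum_erase _ _ (Finset.mem_univ j)]
    gcongr
    calc μ (f ⁻¹' {j})ᶜ = μ (⋃ k ∈ Finset.univ.erase j, f ⁻¹' {k}) := by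
          congr 1; ext; simp
      _ ≤ _ := measure_biUnion_finset_le _ _
  refine NullMeasurable.aemeasurable fun s _ => ?_
  rw [← biUnion_preimage_singleton]
  exact .biUnion s.to_countable fun j _ => hfiber j

end NullMeasurable

/-- The hash values are not assumed measurable: uniformity alone makes them a.e.-measurable. -/
theorem aemeasurable_of_uniform {Ω : Type*} [MeasurableSpace Ω] {μ : Measure Ω}
    [IsProbabilityMeasure μ] {α β : Type*} [Fintype α] [Fintype β] [Nonempty β]
    [MeasurableSpace β] [MeasurableSingletonClass β] {G : Ω → α → β}
    (hunif : ∀ y j, μ {ω | G ω y = j} = ENNReal.ofReal (1 / Fintype.card β)) :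
    AEMeasurable G μ := by
  refine aemeasurable_pi_lambda _ fun y =>
    aemeasurable_of_sum_measure_preimage_singleton_le (le_of_eq ?_)
  have hβ : (Fintype.card β : ℝ) ≠ 0 := Nat.cast_ne_zero.2 Fintype.card_ne_zero
  calc ∑ j, μ ((fun ω => G ω y) ⁻¹' {j}) = ∑ _j : β, ENNReal.ofReal (1 / Fintype.card β) :=
        Finset.sum_congr rfl fun j _ => hunif y j
    _ = μ Set.univ := by
        rw [← ENNReal.ofReal_sum_of_nonneg fun _ _ => by positivity]
        simp [hβ]

section UniformHash

variable {α β : Type*} [Fintype α] [Fintype β] [Nonempty β] [MeasurableSpace β]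
  [MeasurableSingletonClass β] {ν : Measure (α → β)} [IsProbabilityMeasure ν]

theorem measureReal_collision (hunif : ∀ y j, ν.real {h | h y = j} = 1 / Fintype.card β)
    (hpair : ∀ y z, y ≠ z → ∀ j j',
      ν.real {h | h y = j ∧ h z = j'} = ν.real {h | h y = j} * ν.real {h | h z = j'})
    {x y : α} (hyx : y ≠ x) : ν.real {h | h y = h x} = 1 / Fintype.card β := by
  have hunion : {h : α → β | h y = h x} = ⋃ j ∈ Finset.univ, {h | h y = j ∧ h x = j} := by
    ext h
    simp only [Set.mem_ofPred_eq, Set.mem_iUnion, Finset.mem_univ, exists_const]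
    exact ⟨fun hh => ⟨_, hh, rfl⟩, fun ⟨_, h1, h2⟩ => h1.trans h2.symm⟩
  rw [hunion, measureReal_biUnion_finset ?_ fun _ _ => .of_discrete]
  · simp only [hpair y x hyx, hunif, Finset.sum_const, Finset.card_univ, nsmul_eq_mul]
    have : (Fintype.card β : ℝ) ≠ 0 := Nat.cast_ne_zero.2 Fintype.card_ne_zero
    field_simp
  · intro j _ j' _ hjj'
    exact Set.disjoint_left.2 fun h h1 h2 => hjj' (h1.2.symm.trans h2.2)

end UniformHash

section Collision

variable {α β : Type*} [Fintype α] [DecidableEq α] [DecidableEq β]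

/-- The paper's `V - S(x)` in the bucket of `x`. -/
def collisionWeight (c : α → ℝ) (x : α) (h : α → β) : ℝ :=
  ∑ y ∈ Finset.univ.erase x, if h y = h x then c y else 0

theorem collisionWeight_nonneg {c : α → ℝ} (hc : ∀ y, 0 ≤ c y) (x : α) (h : α → β) :
    0 ≤ collisionWeight c x h :=
  Finset.sum_nonneg fun y _ => by split_ifs <;> simp [hc y]

theorem collisionWeight_le_sum {c : α → ℝ} (hc : ∀ y, 0 ≤ c y) (x : α) (h : α → β) :
    collisionWeight c x h ≤ ∑ y, c y :=
  calc collisionWeight c x h ≤ ∑ y ∈ Finset.univ.erase x, c y :=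
        Finset.sum_le_sum fun y _ => by split_ifs <;> simp [hc y]
    _ ≤ ∑ y, c y := Finset.sum_le_sum_of_subset_of_nonneg (Finset.erase_subset _ _)
        fun y _ _ => hc y

theorem sum_map_snd_filter_eq_flowSum_add_collisionWeight (h : α → β) (x : α)
    (l : List (α × ℝ)) :
    ((l.filter fun p => h p.1 = h x).map Prod.snd).sum =
      flowSum x l + collisionWeight (fun y => flowSum y l) x h := by
  rw [← sum_flowSum, collisionWeight, ← Finset.add_sum_erase _ _ (Finset.mem_univ x)]
  simp only [flowSum_filter_eq_ite, if_true]

variable [Fintype β] [MeasurableSpace β] [MeasurableSingletonClass β] {ν : Measure (α → β)}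
  [IsProbabilityMeasure ν]

theorem integral_collisionWeight (x : α) (c : α → ℝ) :
    ∫ h, collisionWeight c x h ∂ν =
      ∑ y ∈ Finset.univ.erase x, ν.real {h | h y = h x} * c y := by
  simp only [collisionWeight]
  rw [integral_finsetSum _ fun _ _ => .of_finite]
  refine Finset.sum_congr rfl fun y _ => ?_
  rw [← smul_eq_mul, ← integral_indicator_const _ .of_discrete]
  simp only [Set.indicator_apply, Set.mem_ofPred_eq]

theorem measureReal_lt_collisionWeight_le_half [Nonempty β]
    (hunif : ∀ y j, ν.real {h | h y = j} = 1 / Fintype.card β)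
    (hpair : ∀ y z, y ≠ z → ∀ j j',
      ν.real {h | h y = j ∧ h z = j'} = ν.real {h | h y = j} * ν.real {h | h z = j'})
    {c : α → ℝ} (hc : ∀ y, 0 ≤ c y) (x : α) {a : ℝ}
    (ha : 2 * ∑ y, c y ≤ a * Fintype.card β) :
    ν.real {h | a < collisionWeight c x h} ≤ 1 / 2 := by
  have hβ : (0 : ℝ) < Fintype.card β := Nat.cast_pos.2 Fintype.card_pos
  have hsum : 0 ≤ ∑ y, c y := Finset.sum_nonneg fun y _ => hc y
  have hmean : ∫ h, collisionWeight c x h ∂ν ≤ (∑ y, c y) / Fintype.card β := calc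
    _ = ∑ y ∈ Finset.univ.erase x, c y / Fintype.card β := by
        rw [integral_collisionWeight]
        refine Finset.sum_congr rfl fun y hy => ?_
        rw [measureReal_collision hunif hpair (Finset.ne_of_mem_erase hy)]
        ring
    _ ≤ ∑ y, c y / Fintype.card β :=
        Finset.sum_le_sum_of_subset_of_nonneg (Finset.erase_subset _ _)
          fun y _ _ => div_nonneg (hc y) hβ.le
    _ = _ := (Finset.sum_div _ _ _).symm
  have ha0 : 0 ≤ a := nonneg_of_mul_nonneg_left (by linarith) hβ
  rcases ha0.eq_or_lt with rfl | ha0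
  · have hempty : {h | 0 < collisionWeight c x h} = ∅ :=
      Set.eq_empty_of_forall_notMem fun (h : α → β) (hh : 0 < collisionWeight c x h) => by
        linarith [collisionWeight_le_sum hc x h]
    simp [hempty]
  · have hmarkov := mul_meas_ge_le_integral_of_nonneg
      (ae_of_all _ (collisionWeight_nonneg hc x)) .of_finite a (μ := ν)
    have hpos : 0 < a * Fintype.card β := mul_pos ha0 hβ
    have : ν.real {h | a ≤ collisionWeight c x h} ≤ 1 / 2 := by
      rw [le_div_iff₀ hβ] at hmean
      refine le_of_mul_le_mul_left ?_ hpos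
      nlinarith [mul_le_mul_of_nonneg_right hmarkov hβ.le]
    exact (measureReal_mono fun (h : α → β) (hh : a < collisionWeight c x h) => hh.le).trans this

end Collision

section Sketch

variable {α β : Type*} [DecidableEq α] [DecidableEq β] (k0 x : α) (h : α → β)
  {l : List (α × ℝ)}

theorem lowerEstimate_runBucket_filter_le (hv : ∀ p ∈ l, 0 ≤ p.2) :
    (runBucket k0 (l.filter fun p => h p.1 = h x)).lowerEstimate x ≤ flowSum x l := by
  have hvf : ∀ p ∈ l.filter fun p => h p.1 = h x, 0 ≤ p.2 :=
    fun p hp => hv p (List.mem_of_mem_filter hp)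
  simpa [flowSum_filter_eq_ite] using (isMajoritySummary_runBucket k0 hvf).lowerEstimate_le hvf x

theorem flowSum_sub_lowerEstimate_runBucket_filter_le [Fintype α] (hv : ∀ p ∈ l, 0 ≤ p.2) :
    flowSum x l - (runBucket k0 (l.filter fun p => h p.1 = h x)).lowerEstimate x ≤
      collisionWeight (fun y => flowSum y l) x h := by
  have hvf : ∀ p ∈ l.filter fun p => h p.1 = h x, 0 ≤ p.2 :=
    fun p hp => hv p (List.mem_of_mem_filter hp)
  have := (isMajoritySummary_runBucket k0 hvf).flowSum_sub_lowerEstimate_le x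
  rw [sum_map_snd_filter_eq_flowSum_add_collisionWeight, flowSum_filter_eq_ite,
    if_pos rfl] at this
  linarith

theorem flowSum_sub_sup'_lowerEstimate_le [Fintype α] {ι : Type*} [Fintype ι] [Nonempty ι]
    (H : ι → α → β) (hv : ∀ p ∈ l, 0 ≤ p.2) (i : ι) :
    flowSum x l - Finset.univ.sup' Finset.univ_nonempty (fun i =>
        (runBucket k0 (l.filter fun p => H i p.1 = H i x)).lowerEstimate x) ≤
      collisionWeight (fun y => flowSum y l) x (H i) := by
  calc _ ≤ flowSum x l - (runBucket k0 (l.filter fun p => H i p.1 = H i x)).lowerEstimate x :=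
        sub_le_sub_left (Finset.le_sup' _ (Finset.mem_univ i)) _
    _ ≤ _ := flowSum_sub_lowerEstimate_runBucket_filter_le k0 x (H i) hv

end Sketch

section HashRow

variable {α β : Type*} [Fintype α] [DecidableEq α] [Fintype β] [Nonempty β] [DecidableEq β]
  [MeasurableSpace β] [MeasurableSingletonClass β]
  {Ω : Type*} [MeasurableSpace Ω] {μ : Measure Ω} [IsProbabilityMeasure μ] {G : Ω → α → β}

theorem measure_lt_collisionWeight_le_half
    (hunif : ∀ y j, μ {ω | G ω y = j} = ENNReal.ofReal (1 / Fintype.card β))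
    (hpair : ∀ y z, y ≠ z → ∀ j j',
      μ {ω | G ω y = j ∧ G ω z = j'} = μ {ω | G ω y = j} * μ {ω | G ω z = j'})
    {c : α → ℝ} (hc : ∀ y, 0 ≤ c y) (x : α) {a : ℝ}
    (ha : 2 * ∑ y, c y ≤ a * Fintype.card β) :
    μ {ω | a < collisionWeight c x (G ω)} ≤ ENNReal.ofReal (1 / 2) := by
  have hG := aemeasurable_of_uniform hunif
  have := Measure.isProbabilityMeasure_map hG
  have hmap (s : Set (α → β)) : (μ.map G).real s = μ.real (G ⁻¹' s) := by
    rw [measureReal_def, Measure.map_apply_of_aemeasurable hG .of_discrete, measureReal_def]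
  rw [← ofReal_measureReal]
  refine ENNReal.ofReal_le_ofReal ?_
  refine (hmap _).symm.trans_le (measureReal_lt_collisionWeight_le_half ?_ ?_ hc x ha)
  · intro y j
    rw [hmap]
    simp [measureReal_def, Set.preimage, hunif]
  · intro y z hyz j j'
    simp only [hmap, measureReal_def]
    exact (congrArg ENNReal.toReal (hpair y z hyz j j')).trans ENNReal.toReal_mul

end HashRow

theorem ofReal_one_sub_le_measure_compl {Ω : Type*} [MeasurableSpace Ω] {μ : Measure Ω}
    [IsProbabilityMeasure μ] {s : Set Ω} {p : ℝ} (hp : 0 ≤ p) (hs : μ s ≤ ENNReal.ofReal p) :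
    ENNReal.ofReal (1 - p) ≤ μ sᶜ := by
  rw [ENNReal.ofReal_sub _ hp, ENNReal.ofReal_one, tsub_le_iff_left, ← measure_univ (μ := μ)]
  exact (measure_univ_le_add_compl s).trans (add_le_add_left hs _)
theorem lower_bound_estimate_general {Ω : Type*} [MeasurableSpace Ω]
    (μ : Measure Ω) [IsProbabilityMeasure μ]
    (n r w : ℕ) (hr : 0 < r) (hw : 0 < w)
    (ε δ : ℝ) (hε0 : 0 < ε)
    (hδ : δ = (1 / 2 : ℝ) ^ r) (hwε : (w : ℝ) = 2 / ε)
    (l : List (Fin n × ℝ)) (hv : ∀ p ∈ l, 0 ≤ p.2) (k0 x : Fin n)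
    (g : Ω → Fin r → Fin n → Fin w)
    (hrows : iIndepFun (fun i ω => g ω i) μ)
    (huniform : ∀ i y j, μ {ω | g ω i y = j} = ENNReal.ofReal (1 / (w : ℝ)))
    (hpair : ∀ (i : Fin r) (y z : Fin n), y ≠ z → ∀ j j',
      μ {ω | g ω i y = j ∧ g ω i z = j'} =
        μ {ω | g ω i y = j} * μ {ω | g ω i z = j'}) :
    haveI : Nonempty (Fin r) := Fin.pos_iff_nonempty.mp hr
    (∀ ω : Ω,
      Finset.univ.sup' Finset.univ_nonempty (fun i : Fin r =>
        if (runBucket k0 (l.filter fun p => g ω i p.1 = g ω i x)).K = x then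
          (runBucket k0 (l.filter fun p => g ω i p.1 = g ω i x)).C
        else 0) ≤ flowSum x l) ∧
    ENNReal.ofReal (1 - δ) ≤
      μ {ω |
        flowSum x l -
          Finset.univ.sup' Finset.univ_nonempty (fun i : Fin r =>
            if (runBucket k0 (l.filter fun p => g ω i p.1 = g ω i x)).K = x then
              (runBucket k0 (l.filter fun p => g ω i p.1 = g ω i x)).C
            else 0) ≤ ε * (l.map Prod.snd).sum} := by
  have : Nonempty (Fin r) := Fin.pos_iff_nonempty.mp hr
  have : NeZero w := ⟨hw.ne'⟩
  set S := (l.map Prod.snd).sum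
  change (∀ ω, Finset.univ.sup' Finset.univ_nonempty (fun i =>
      (runBucket k0 (l.filter fun p => g ω i p.1 = g ω i x)).lowerEstimate x) ≤ flowSum x l) ∧
    ENNReal.ofReal (1 - δ) ≤ μ {ω | flowSum x l - Finset.univ.sup' Finset.univ_nonempty (fun i =>
      (runBucket k0 (l.filter fun p => g ω i p.1 = g ω i x)).lowerEstimate x) ≤ ε * S}
  refine ⟨fun ω => Finset.sup'_le _ _ fun i _ =>
    lowerEstimate_runBucket_filter_le k0 x (g ω i) hv, ?_⟩
  set bad : Set (Fin n → Fin w) := {h | ε * S < collisionWeight (fun y => flowSum y l) x h}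
  have hrow (i : Fin r) : μ ((fun ω => g ω i) ⁻¹' bad) ≤ ENNReal.ofReal (1 / 2) :=
    measure_lt_collisionWeight_le_half (by simpa only [Fintype.card_fin] using huniform i)
      (hpair i) (flowSum_nonneg hv) x
      (by rw [sum_flowSum, Fintype.card_fin, hwε, mul_right_comm, mul_div_cancel₀ _ hε0.ne'])
  have hall : μ (⋂ i ∈ Finset.univ, (fun ω => g ω i) ⁻¹' bad) ≤ ENNReal.ofReal δ := by
    rw [hrows.measure_inter_preimage_eq_mul _ fun _ _ => .of_discrete, hδ,
      ENNReal.ofReal_pow (by norm_num)]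
    exact (Finset.prod_le_prod' fun i _ => hrow i).trans_eq (by simp)
  refine (ofReal_one_sub_le_measure_compl (by rw [hδ]; positivity) hall).trans
    (measure_mono fun ω hω => ?_)
  obtain ⟨i, hi⟩ : ∃ i, ω ∉ (fun ω => g ω i) ⁻¹' bad := by simpa using hω
  exact (flowSum_sub_sup'_lowerEstimate_le k0 x (fun i => g ω i) hv i).trans (not_lt.1 hi)

/-- Lower-bound estimate of MV-Sketch: with `r = log₂(1/δ)` rows, `w = 2/ε`
buckets per row, independent rows and pairwise-independent uniform hashes,
the lower-bound estimate `L(x) = max_i L_i(x)` (where `L_i(x) = C` of the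
hashed bucket if its key equals `x`, else `0`) always satisfies `L(x) ≤ S(x)`,
and moreover `S(x) − L(x) ≤ ε𝒮` with probability at least `1 − δ`. -/
theorem lower_bound_estimate {Ω : Type*} [MeasurableSpace Ω]
    (μ : Measure Ω) [IsProbabilityMeasure μ]
    (n r w : ℕ) (hr : 0 < r) (hw : 0 < w)
    (ε δ : ℝ) (hε0 : 0 < ε) (hε1 : ε < 1)
    (hδ : δ = (1 / 2 : ℝ) ^ r) (hwε : (w : ℝ) = 2 / ε)
    (l : List (Fin n × ℝ)) (hv : ∀ p ∈ l, 0 ≤ p.2) (k0 x : Fin n)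
    (g : Ω → Fin r → Fin n → Fin w)
    (hrows : iIndepFun (fun i ω => g ω i) μ)
    (huniform : ∀ i y j, μ {ω | g ω i y = j} = ENNReal.ofReal (1 / (w : ℝ)))
    (hpair : ∀ (i : Fin r) (y z : Fin n), y ≠ z → ∀ j j',
      μ {ω | g ω i y = j ∧ g ω i z = j'} =
        μ {ω | g ω i y = j} * μ {ω | g ω i z = j'}) :
    haveI : Nonempty (Fin r) := Fin.pos_iff_nonempty.mp hr
    (∀ ω : Ω,
      Finset.univ.sup' Finset.univ_nonempty (fun i : Fin r =>
        if (runBucket k0 (l.filter fun p => g ω i p.1 = g ω i x)).K = x then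
          (runBucket k0 (l.filter fun p => g ω i p.1 = g ω i x)).C
        else 0) ≤ flowSum x l) ∧
    ENNReal.ofReal (1 - δ) ≤
      μ {ω |
        flowSum x l -
          Finset.univ.sup' Finset.univ_nonempty (fun i : Fin r =>
            if (runBucket k0 (l.filter fun p => g ω i p.1 = g ω i x)).K = x then
              (runBucket k0 (l.filter fun p => g ω i p.1 = g ω i x)).C
            else 0) ≤ ε * (l.map Prod.snd).sum} :=
  lower_bound_estimate_general μ n r w hr hw ε δ hε0 hδ hwε l hv k0 x g hrows huniform hpair
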